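/- arXiv:math/0309342 — 2 statements merged into one kernel-verified Lean document; each statement's English description precedes it below -/
import Mathlib

section
/- For matrices M1, M2, M3 in SL(2,C), setting a_i = Tr(M_i) for i=1,2,3, a_4 = Tr(M1 M2 M3), x_1 = Tr(M2 M3), x_2 = Tr(M3 M1), x_3 = Tr(M1 M2), the relation x_1 x_2 x_3 + x_1^2 + x_2^2 + x_3^2 - θ_1 x_1 - θ_2 x_2 - θ_3 x_3 + θ_4 = 0 holds, where θ_i = a_i a_4 + a_j a_k for (i,j,k) a cyclic permutation of (1,2,3) and θ_4 = a_1 a_2 a_3 a_4 + a_1^2 + a_2^2 + a_3^2 + a_4^2 - 4. -/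
/-!
In `SL(2, R)` Cayley–Hamilton reads `X + X⁻¹ = tr X • 1`, hence
`tr X * tr Y = tr (X * Y) + tr (X * Y⁻¹)`. Repeated use of this identity shows that
`tr (XYZ)` and `tr (XZY)` have sum `P` and product `Q`, both polynomials in the traces of
`X, Y, Z, YZ, ZX, XY`. So `tr (XYZ)` is a root of `t ^ 2 - P * t + Q`, and this is the cubic relation.
-/

open Matrix
open scoped MatrixGroups

namespace Matrix

variable {R : Type*} [CommRing R]

theorem adjugate_fin_two_eq_trace_smul_one_sub (A : Matrix (Fin 2) (Fin 2) R) :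
    adjugate A = trace A • 1 - A := by
  ext i j
  fin_cases i <;> fin_cases j <;> simp [adjugate_fin_two, trace_fin_two]

theorem trace_mul_mul_add_trace_mul_mul_fin_two (A B C : Matrix (Fin 2) (Fin 2) R) :
    trace (A * B * C) + trace (A * C * B) =
      trace A * trace (B * C) + trace B * trace (C * A) + trace C * trace (A * B)
        - trace A * trace B * trace C := by
  simp only [trace_fin_two, mul_apply, Fin.sum_univ_two]
  ring

namespace SpecialLinearGroup

section

variable {n : Type*} [DecidableEq n] [Fintype n] (X Y g : SpecialLinearGroup n R)

theorem trace_mul_comm :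
    trace (↑(X * Y) : Matrix n n R) = trace (↑(Y * X) : Matrix n n R) :=
  Matrix.trace_mul_comm _ _

theorem trace_conj :
    trace (↑(g * X * g⁻¹) : Matrix n n R) = trace (↑X : Matrix n n R) := by
  rw [coe_mul, coe_mul, trace_mul_cycle, ← coe_mul, ← coe_mul, inv_mul_cancel, one_mul]

end

local notation:max "τ" X:max => Matrix.trace ((X : SL(2, R)) : Matrix (Fin 2) (Fin 2) R)

variable (X Y Z : SL(2, R))

theorem trace_mul_inv_fin_two : τ (X * Y⁻¹) = τ X * τ Y - τ (X * Y) := by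
  simp [coe_inv, adjugate_fin_two_eq_trace_smul_one_sub, mul_sub, trace_sub, mul_comm]

theorem trace_inv_fin_two : τ X⁻¹ = τ X := by
  have h := trace_mul_inv_fin_two 1 X
  simp only [one_mul, coe_one, trace_one, Fintype.card_fin, Nat.cast_ofNat] at h
  linear_combination h

theorem trace_mul_self_fin_two : τ (X * X) = τ X ^ 2 - 2 := by
  have h := trace_mul_inv_fin_two X X
  simp only [mul_inv_cancel, coe_one, trace_one, Fintype.card_fin, Nat.cast_ofNat] at h
  linear_combination h

theorem trace_mul_mul_mul_fin_two :
    τ (X * Y * X * Z) = τ (X * Y) * τ (X * Z) - τ (Z * Y⁻¹) := by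
  have h := trace_mul_inv_fin_two (X * Z) (X * Y)
  rw [show X * Z * (X * Y)⁻¹ = X * (Z * Y⁻¹) * X⁻¹ by group, trace_conj, trace_mul_comm (X * Z),
    show X * Y * (X * Z) = X * Y * X * Z by group] at h
  linear_combination h

theorem trace_commutator_fin_two :
    τ (X * Y * X⁻¹ * Y⁻¹) = τ X ^ 2 + τ Y ^ 2 + τ (X * Y) ^ 2 - τ X * τ Y * τ (X * Y) - 2 := by
  have h₁ := trace_mul_inv_fin_two (X * Y) (Y * X)
  have h₂ := trace_mul_inv_fin_two X (Y * Y * X)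
  have h₃ := trace_mul_inv_fin_two Y (Y * X)
  rw [show X * Y * (Y * X)⁻¹ = X * Y * X⁻¹ * Y⁻¹ by group, trace_mul_comm Y X,
    show X * Y * (Y * X) = X * Y * Y * X by group] at h₁
  rw [show X * (Y * Y * X)⁻¹ = (Y * Y)⁻¹ by group, trace_inv_fin_two, trace_mul_self_fin_two,
    show X * (Y * Y * X) = X * Y * Y * X by group] at h₂
  rw [show Y * (Y * X)⁻¹ = Y * X⁻¹ * Y⁻¹ by group, trace_conj, trace_inv_fin_two,
    show Y * (Y * X) = Y * Y * X by group, trace_mul_comm Y X] at h₃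
  linear_combination h₁ - h₂ - τ X * h₃

theorem trace_mul_mul_mul_trace_mul_mul_fin_two :
    τ (X * Y * Z) * τ (X * Z * Y) =
      τ (Y * Z) * τ (Z * X) * τ (X * Y) + τ (Y * Z) ^ 2 + τ (Z * X) ^ 2 + τ (X * Y) ^ 2
        - τ Y * τ Z * τ (Y * Z) - τ Z * τ X * τ (Z * X) - τ X * τ Y * τ (X * Y)
        + τ X ^ 2 + τ Y ^ 2 + τ Z ^ 2 - 4 := by
  have hswap : τ (Y * X * Z) = τ (X * Z * Y) := by
    rw [show Y * X * Z = Y * (X * Z * Y) * Y⁻¹ by group, trace_conj]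
  have hrot : τ (X * Y * Z * (Y * X * Z)) = τ (Y * Z * Y * (X * Z * X)) := by
    rw [show X * Y * Z * (Y * X * Z) = X * (Y * Z * Y * (X * Z * X)) * X⁻¹ by group, trace_conj]
  have hYXZX : τ (Y * (X * Z * X)) = τ (X * Y) * τ (Z * X) - τ Y * τ Z + τ (Y * Z) := by
    rw [show Y * (X * Z * X) = Y * (X * Z * X * Y) * Y⁻¹ by group, trace_conj,
      trace_mul_mul_mul_fin_two, trace_mul_inv_fin_two, trace_mul_comm X Z]
    ring
  have hXZXZ : τ (X * Z * X * Z⁻¹) = τ (Z * X) * (τ Z * τ X - τ (Z * X)) - τ Z ^ 2 + 2 := by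
    rw [trace_mul_mul_mul_fin_two, show Z⁻¹ * Z⁻¹ = (Z * Z)⁻¹ by group, trace_inv_fin_two,
      trace_mul_self_fin_two, trace_mul_inv_fin_two, trace_mul_comm X Z]
    ring
  -- `tr (XYZ) * tr (YXZ) = tr (XYZ * YXZ) + tr (XYZ * (YXZ)⁻¹)`, the last being a commutator
  have hsplit := trace_mul_inv_fin_two (X * Y * Z) (Y * X * Z)
  rw [show X * Y * Z * (Y * X * Z)⁻¹ = X * Y * X⁻¹ * Y⁻¹ by group, trace_commutator_fin_two,
    hswap, hrot, trace_mul_mul_mul_fin_two, hYXZX, hXZXZ] at hsplit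
  linear_combination -hsplit

end SpecialLinearGroup

end Matrix

/-- The fundamental cubic trace relation for triples of matrices in SL(2,ℂ). -/
theorem sl2_trace_cubic_relation (M1 M2 M3 : Matrix (Fin 2) (Fin 2) ℂ)
    (h1 : M1.det = 1) (h2 : M2.det = 1) (h3 : M3.det = 1) :
    let a1 := M1.trace
    let a2 := M2.trace
    let a3 := M3.trace
    let a4 := (M1 * M2 * M3).trace
    let x1 := (M2 * M3).trace
    let x2 := (M3 * M1).trace
    let x3 := (M1 * M2).trace
    x1 * x2 * x3 + x1 ^ 2 + x2 ^ 2 + x3 ^ 2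
      - (a1 * a4 + a2 * a3) * x1 - (a2 * a4 + a3 * a1) * x2 - (a3 * a4 + a1 * a2) * x3
      + (a1 * a2 * a3 * a4 + a1 ^ 2 + a2 ^ 2 + a3 ^ 2 + a4 ^ 2 - 4) = 0 := by
  dsimp only
  have hsum := trace_mul_mul_add_trace_mul_mul_fin_two M1 M2 M3
  have hprod :=
    SpecialLinearGroup.trace_mul_mul_mul_trace_mul_mul_fin_two ⟨M1, h1⟩ ⟨M2, h2⟩ ⟨M3, h3⟩
  linear_combination (M1 * M2 * M3).trace * hsum - hprod
end

section
/- Let f : X → Y be a continuous surjective map of locally compact Hausdorff topological spaces, S ⊂ Y a closed subset, Y♯ = Y \ S, X♯ = f^{-1}(Y♯). Assume X♯ is dense in X, the restriction f : X♯ → Y♯ is a homeomorphism, every fiber f^{-1}(y) is compact, and every point y ∈ Y admits open neighborhoods U ⊇ f^{-1}(y) in X and V ∋ y in Y with f(U) ⊂ V such that f|_U : U → V is proper and Y♯ ∩ V is connected. Then f(X♯ ∩ U) = Y♯ ∩ V and f^{-1}(V) = U; in particular f is proper. -/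
/-! The set `W = f(X♯ ∩ U)` equals `Y♯ ∩ g⁻¹(U)`, so it is open; properness of `f|_U` over `V`
makes `f(U)` closed in `V`, so `W` is also closed in `Y♯ ∩ V`, and connectedness gives
`W = Y♯ ∩ V`. Injectivity of `f` on `X♯` then puts `X♯ ∩ f⁻¹(V)` inside `U`, and since `X♯` is
dense and `U` is closed in `f⁻¹(V)` (properness again), `f⁻¹(V) = U`. Finally, properness of `f`
is local on `Y`: a compact set is a finite union of compact pieces, each inside some `V`. -/

section FujikiLemma

open Set Topology

variable {X Y : Type*} [TopologicalSpace X] [TopologicalSpace Y] {f : X → Y} {g : Y → X}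
  {Ys : Set Y} {U : Set X} {V : Set Y}

theorem isProperMap_of_forall_exists_mem_nhds [T2Space Y] [CompactlyCoherentSpace Y]
    (hf : Continuous f)
    (h : ∀ y, ∃ V ∈ 𝓝 y, ∀ K ⊆ V, IsCompact K → IsCompact (f ⁻¹' K)) :
    IsProperMap f := by
  choose V hV hVK using h
  refine isProperMap_iff_isCompact_preimage.mpr ⟨hf, fun K hK => ?_⟩
  obtain ⟨t, -, hKt⟩ := hK.elim_nhds_subcover (fun y => interior (V y))
    fun y _ => interior_mem_nhds.mpr (hV y)
  obtain ⟨L, hL, hLV, rfl⟩ := hK.finite_compact_cover t _ (fun _ _ => isOpen_interior) hKt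
  rw [preimage_iUnion₂]
  exact t.isCompact_biUnion fun y _ => hVK y (L y) ((hLV y).trans interior_subset) (hL y)

theorem closure_image_inter_subset_image [LocallyCompactSpace Y] [T2Space Y]
    (hf : Continuous f) (hV : IsOpen V)
    (hUV : ∀ K ⊆ V, IsCompact K → IsCompact (U ∩ f ⁻¹' K)) :
    closure (f '' U) ∩ V ⊆ f '' U := by
  rintro y ⟨hy, hyV⟩
  obtain ⟨K, hK, hyK, hKV⟩ := exists_compact_subset hV hyV
  have hclosed : IsClosed (f '' U ∩ K) := by
    simpa only [image_inter_preimage] using ((hUV K hKV hK).image hf).isClosed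
  have hyUK : y ∈ closure (f '' U ∩ K) :=
    closure_mono (inter_subset_inter_right _ interior_subset)
      (isOpen_interior.closure_inter ⟨hy, hyK⟩)
  exact (hclosed.closure_subset hyUK).1

theorem closure_inter_preimage_subset [LocallyCompactSpace Y] [T2Space X]
    (hf : Continuous f) (hV : IsOpen V)
    (hUV : ∀ K ⊆ V, IsCompact K → IsCompact (U ∩ f ⁻¹' K)) :
    closure U ∩ f ⁻¹' V ⊆ U := by
  rintro x ⟨hx, hxV⟩
  obtain ⟨K, hK, hxK, hKV⟩ := exists_compact_subset hV hxV
  have hxUK : x ∈ closure (U ∩ f ⁻¹' K) :=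
    closure_mono (inter_subset_inter_right _ (preimage_mono interior_subset))
      ((isOpen_interior.preimage hf).closure_inter ⟨hx, hxK⟩)
  exact ((hUV K hKV hK).isClosed.closure_subset hxUK).1

theorem isOpen_image_preimage_inter (hsurj : Function.Surjective f) (hYs : IsOpen Ys)
    (hg : ContinuousOn g Ys) (hgf : LeftInvOn g f (f ⁻¹' Ys)) (hU : IsOpen U) :
    IsOpen (f '' (f ⁻¹' Ys ∩ U)) := by
  rw [inter_comm, hgf.image_inter', image_preimage_eq Ys hsurj, inter_comm]
  exact hg.isOpen_inter_preimage hYs hU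

theorem image_preimage_inter_eq_inter [LocallyCompactSpace Y] [T2Space Y]
    (hf : Continuous f) (hsurj : Function.Surjective f) (hYs : IsOpen Ys)
    (hg : ContinuousOn g Ys) (hgf : LeftInvOn g f (f ⁻¹' Ys)) (hdense : Dense (f ⁻¹' Ys))
    (hU : IsOpen U) (hV : IsOpen V) (hUne : U.Nonempty) (hUV : f '' U ⊆ V)
    (hproper : ∀ K ⊆ V, IsCompact K → IsCompact (U ∩ f ⁻¹' K))
    (hconn : IsPreconnected (Ys ∩ V)) :
    f '' (f ⁻¹' Ys ∩ U) = Ys ∩ V := by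
  have hW : f '' (f ⁻¹' Ys ∩ U) = f '' U ∩ Ys := by rw [inter_comm, image_inter_preimage]
  refine subset_antisymm ?_ (hconn.subset_of_closure_inter_subset
    (isOpen_image_preimage_inter hsurj hYs hg hgf hU) ?_ ?_)
  · rw [hW, inter_comm]
    exact inter_subset_inter_right _ hUV
  · obtain ⟨x, hxU, hxYs⟩ := hdense.inter_open_nonempty U hU hUne
    exact ⟨f x, ⟨hxYs, hUV (mem_image_of_mem f hxU)⟩, mem_image_of_mem f ⟨hxYs, hxU⟩⟩
  · rw [hW]
    rintro y ⟨hy, hyYs, hyV⟩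
    exact ⟨closure_image_inter_subset_image hf hV hproper
      ⟨closure_mono inter_subset_left hy, hyV⟩, hyYs⟩

theorem preimage_eq_of_image_preimage_inter_eq [LocallyCompactSpace Y] [T2Space X]
    (hf : Continuous f) (hinj : InjOn f (f ⁻¹' Ys)) (hdense : Dense (f ⁻¹' Ys))
    (hV : IsOpen V) (hUV : f '' U ⊆ V)
    (hproper : ∀ K ⊆ V, IsCompact K → IsCompact (U ∩ f ⁻¹' K))
    (himage : f '' (f ⁻¹' Ys ∩ U) = Ys ∩ V) :
    f ⁻¹' V = U := by
  refine subset_antisymm (fun x hx => ?_) (image_subset_iff.mp hUV)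
  have hXsV : f ⁻¹' V ∩ f ⁻¹' Ys ⊆ U := by
    rintro z ⟨hzV, hzYs⟩
    obtain ⟨z', ⟨hz'Ys, hz'U⟩, hz'z⟩ := himage.symm.subset ⟨hzYs, hzV⟩
    exact hinj hz'Ys hzYs hz'z ▸ hz'U
  exact closure_inter_preimage_subset hf hV hproper
    ⟨closure_mono hXsV (hdense.open_subset_closure_inter (hV.preimage hf) hx), hx⟩

end FujikiLemma

theorem fujiki_properness_lemma_general {X Y : Type*} [TopologicalSpace X] [TopologicalSpace Y]
    [T2Space X] [LocallyCompactSpace Y] [T2Space Y]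
    (f : X → Y) (hc : Continuous f) (hsurj : Function.Surjective f)
    (S : Set Y) (hS : IsClosed S)
    (Ys : Set Y) (hYs : Ys = Sᶜ)
    (Xs : Set X) (hXs : Xs = f ⁻¹' Ys)
    (hdense : Dense Xs)
    (g : Y → X) (hg2 : ContinuousOn g Ys)
    (hg3 : ∀ x ∈ Xs, g (f x) = x)
    (hnbhd : ∀ y : Y, ∃ (U : Set X) (V : Set Y), IsOpen U ∧ IsOpen V ∧
      f ⁻¹' {y} ⊆ U ∧ y ∈ V ∧ f '' U ⊆ V ∧
      (∀ K ⊆ V, IsCompact K → IsCompact (U ∩ f ⁻¹' K)) ∧ IsConnected (Ys ∩ V)) :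
    (∀ (y : Y) (U : Set X) (V : Set Y), IsOpen U → IsOpen V →
      f ⁻¹' {y} ⊆ U → y ∈ V → f '' U ⊆ V →
      (∀ K ⊆ V, IsCompact K → IsCompact (U ∩ f ⁻¹' K)) → IsConnected (Ys ∩ V) →
      f '' (Xs ∩ U) = Ys ∩ V ∧ f ⁻¹' V = U) ∧
    IsProperMap f := by
  subst hXs
  have hgf : Set.LeftInvOn g f (f ⁻¹' Ys) := hg3
  have hYsOpen : IsOpen Ys := hYs ▸ hS.isOpen_compl
  have key : ∀ (y : Y) (U : Set X) (V : Set Y), IsOpen U → IsOpen V →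
      f ⁻¹' {y} ⊆ U → y ∈ V → f '' U ⊆ V →
      (∀ K ⊆ V, IsCompact K → IsCompact (U ∩ f ⁻¹' K)) → IsConnected (Ys ∩ V) →
      f '' (f ⁻¹' Ys ∩ U) = Ys ∩ V ∧ f ⁻¹' V = U := by
    intro y U V hU hV hfiber _ hUV hproper hconn
    obtain ⟨x, rfl⟩ := hsurj y
    have himage := image_preimage_inter_eq_inter hc hsurj hYsOpen hg2 hgf hdense hU hV
      ⟨x, hfiber rfl⟩ hUV hproper hconn.isPreconnected
    exact ⟨himage,
      preimage_eq_of_image_preimage_inter_eq hc hgf.injOn hdense hV hUV hproper himage⟩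
  refine ⟨key, isProperMap_of_forall_exists_mem_nhds hc fun y => ?_⟩
  obtain ⟨U, V, hU, hV, hfiber, hyV, hUV, hproper, hconn⟩ := hnbhd y
  have hpre : f ⁻¹' V = U := (key y U V hU hV hfiber hyV hUV hproper hconn).2
  refine ⟨V, hV.mem_nhds hyV, fun K hKV hK => ?_⟩
  simpa only [← hpre, Set.inter_eq_right.mpr (Set.preimage_mono hKV)] using hproper K hKV hK

/-- Topological version of Fujiki's lemma. Let `f : X → Y` be a continuous surjection of
locally compact Hausdorff spaces, `S ⊆ Y` closed, `Y♯ = Y \ S`, `X♯ = f⁻¹(Y♯)`. Assume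
`X♯` is dense in `X`, `f` restricts to a homeomorphism `X♯ → Y♯` (witnessed by a
continuous inverse `g`), all fibers of `f` are compact, and every `y ∈ Y` admits open
neighborhoods `U ⊇ f⁻¹(y)` and `V ∋ y` with `f(U) ⊆ V`, `f|_U : U → V` proper and
`Y♯ ∩ V` connected. Then for any such `y, U, V` we have `f(X♯ ∩ U) = Y♯ ∩ V` and
`f⁻¹(V) = U`; in particular `f` is a proper map. -/
theorem fujiki_properness_lemma {X Y : Type*} [TopologicalSpace X] [TopologicalSpace Y]
    [LocallyCompactSpace X] [T2Space X] [LocallyCompactSpace Y] [T2Space Y]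
    (f : X → Y) (hc : Continuous f) (hsurj : Function.Surjective f)
    (S : Set Y) (hS : IsClosed S)
    (Ys : Set Y) (hYs : Ys = Sᶜ)
    (Xs : Set X) (hXs : Xs = f ⁻¹' Ys)
    (hdense : Dense Xs)
    (g : Y → X) (hg1 : Set.MapsTo g Ys Xs) (hg2 : ContinuousOn g Ys)
    (hg3 : ∀ x ∈ Xs, g (f x) = x) (hg4 : ∀ y ∈ Ys, f (g y) = y)
    (hfib : ∀ y : Y, IsCompact (f ⁻¹' {y}))
    (hnbhd : ∀ y : Y, ∃ (U : Set X) (V : Set Y), IsOpen U ∧ IsOpen V ∧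
      f ⁻¹' {y} ⊆ U ∧ y ∈ V ∧ f '' U ⊆ V ∧
      (∀ K ⊆ V, IsCompact K → IsCompact (U ∩ f ⁻¹' K)) ∧ IsConnected (Ys ∩ V)) :
    (∀ (y : Y) (U : Set X) (V : Set Y), IsOpen U → IsOpen V →
      f ⁻¹' {y} ⊆ U → y ∈ V → f '' U ⊆ V →
      (∀ K ⊆ V, IsCompact K → IsCompact (U ∩ f ⁻¹' K)) → IsConnected (Ys ∩ V) →
      f '' (Xs ∩ U) = Ys ∩ V ∧ f ⁻¹' V = U) ∧
    IsProperMap f :=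
  fujiki_properness_lemma_general f hc hsurj S hS Ys hYs Xs hXs hdense g hg2 hg3 hnbhd
end
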